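/- For every μ > 0 and every λ ≥ 2, the inequality H(λ,μ) ≥ (μ/(4(1+μ)))·(λ−1) holds, where H(λ,μ) = μλ·ln λ − (1+μλ)·ln((1+μλ)/(1+μ)). -/

import Mathlib

/-!
The gap `g(λ) = H(λ, μ) - μ / (1 + μ) * (λ - 1 - log λ)` vanishes at `λ = 1`, and with
`t = λ (1 + μ) / (1 + μ λ)` its derivative is `μ * (log t - (1 - 1 / t)) ≥ 0`; hence
`H(λ, μ) ≥ μ / (1 + μ) * (λ - 1 - log λ)` for `λ ≥ 1`. For `λ ≥ 2`,
`log λ ≤ log 2 + λ / 2 - 1 ≤ 3 / 4 * (λ - 1)`, which leaves `μ / (4 (1 + μ)) * (λ - 1)`.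
-/

open Real Set

noncomputable def H (lam mu : ℝ) : ℝ :=
  mu * lam * log lam - (1 + mu * lam) * log ((1 + mu * lam) / (1 + mu))

lemma hasDerivAt_H {mu x : ℝ} (hmu : 0 ≤ mu) (hx : 0 < x) :
    HasDerivAt (H · mu) (mu * (log x - log ((1 + mu * x) / (1 + mu)))) x := by
  have hlin : HasDerivAt (fun y => (1 + mu * y) / (1 + mu)) (mu / (1 + mu)) x := by
    simpa using ((hasDerivAt_id x).const_mul mu |>.const_add 1).div_const (1 + mu)
  have h := ((hasDerivAt_mul_log hx.ne').const_mul mu).sub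
    (((hasDerivAt_mul_log (by positivity)).comp x hlin).const_mul (1 + mu))
  have hfun : (H · mu) = fun y => mu * (y * log y) - (1 + mu) * ((1 + mu * y) / (1 + mu) *
      log ((1 + mu * y) / (1 + mu))) := by
    ext y
    simp only [H]
    field_simp
  rw [hfun]
  refine h.congr_deriv ?_
  field_simp
  ring

lemma div_mul_sub_one_sub_log_le_H {mu lam : ℝ} (hmu : 0 ≤ mu) (hlam : 1 ≤ lam) :
    mu / (1 + mu) * (lam - 1 - log lam) ≤ H lam mu := by
  let gap : ℝ → ℝ := fun x => H x mu - mu / (1 + mu) * (x - 1 - log x)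
  have hderiv : ∀ x ∈ Ici (1 : ℝ), HasDerivAt gap (mu * (log x - log ((1 + mu * x) / (1 + mu)))
      - mu / (1 + mu) * (1 - x⁻¹)) x := fun x hx =>
    have hx : 0 < x := zero_lt_one.trans_le hx
    (hasDerivAt_H hmu hx).sub
      ((((hasDerivAt_id x).sub_const 1).sub (hasDerivAt_log hx.ne')).const_mul _)
  have hmono : MonotoneOn gap (Ici 1) := by
    refine monotoneOn_of_hasDerivWithinAt_nonneg (convex_Ici 1)
      (fun x hx => (hderiv x hx).continuousAt.continuousWithinAt)
      (fun x hx => (hderiv x (interior_subset hx)).hasDerivWithinAt) fun x hx => ?_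
    rw [interior_Ici] at hx
    have hx : 0 < x := zero_lt_one.trans hx
    set s := (1 + mu * x) / (1 + mu)
    have hs : 0 < s := by positivity
    have key := one_sub_inv_le_log_of_pos (div_pos hx hs)
    rw [log_div hx.ne' hs.ne', inv_div,
      show 1 - s / x = (1 - x⁻¹) / (1 + mu) by simp only [s]; field_simp; ring] at key
    rw [sub_nonneg, div_mul_comm, mul_comm]
    exact mul_le_mul_of_nonneg_left key hmu
  simpa [gap, H] using hmono (mem_Ici.2 le_rfl) (mem_Ici.2 hlam) hlam

lemma log_le_three_quarters_mul_sub_one {x : ℝ} (hx : 2 ≤ x) : log x ≤ 3 / 4 * (x - 1) := by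
  have h := log_le_sub_one_of_pos (x := x / 2) (by positivity)
  rw [log_div (by positivity) two_ne_zero] at h
  linarith [log_two_lt_d9]

theorem H_approx_three (mu : ℝ) (hmu : 0 < mu) (lam : ℝ) (hlam : 2 ≤ lam) :
    mu / (4 * (1 + mu)) * (lam - 1) ≤ (mu * lam * Real.log lam - (1 + mu * lam) * Real.log ((1 + mu * lam) / (1 + mu))) := by
  calc mu / (4 * (1 + mu)) * (lam - 1)
      = mu / (1 + mu) * (lam - 1 - 3 / 4 * (lam - 1)) := by field_simp; ring
    _ ≤ mu / (1 + mu) * (lam - 1 - log lam) := by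
      gcongr
      exact log_le_three_quarters_mul_sub_one hlam
    _ ≤ H lam mu := div_mul_sub_one_sub_log_le_H hmu.le (by linarith)
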